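/- arXiv:2205.03180 — 7 statements merged into one kernel-verified Lean document; each statement's English description precedes it below -/
import Mathlib

section
/- Let A be a matrix over GF(p) representing a matroid M, with distinct columns a, b, and fix e ∈ {a,b}. Form A'_{a,b} from the splitting matrix A_{a,b} by appending a new column z whose last coordinate is α ≠ 0 and all other coordinates are 0, and form A^e_{a,b} from A'_{a,b} by appending a further column γ equal to the difference of the column e and the column z. Then rank(A^e_{a,b}) = rank(A) + 1. -/
open Matrix Set

variable {α : Type*}

/-- The columns of `A` indexed by `S` are linearly independent. -/
def ColIndep {m E F : Type*} [Semiring F] (A : Matrix m E F) (S : Set E) : Prop :=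
  LinearIndependent F (fun s : S => Aᵀ s.1)

/-- `M` is the vector matroid of the matrix `A` (ground set all columns). -/
def IsVectorMatroid {m E F : Type*} [Semiring F] (M : Matroid E) (A : Matrix m E F) : Prop :=
  M.E = Set.univ ∧ ∀ S : Set E, M.Indep S ↔ ColIndep A S

/-- The splitting matrix `A_{a,b}`: `A` with an extra row having `α` in columns `a`, `b`
and `0` elsewhere. -/
def splitMatrix {m E F : Type*} [Zero F] [DecidableEq E] (A : Matrix m E F) (a b : E) (α : F) :
    Matrix (m ⊕ Unit) E F :=
  Matrix.of fun i j =>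
    Sum.elim (fun i' => A i' j) (fun _ => if j = a ∨ j = b then α else 0) i

/-- The column `z = (0,…,0,α)ᵀ`. -/
def zColumn {m F : Type*} [Zero F] (α : F) : m ⊕ Unit → F :=
  Sum.elim (fun _ => 0) (fun _ => α)

/-- The es-splitting matrix `A^e_{a,b}`: the splitting matrix with two extra columns,
`Sum.inr 0 ↦ z = (0,…,0,α)ᵀ` and `Sum.inr 1 ↦ γ = e - z`. -/
def esMatrix {m E F : Type*} [Ring F] [DecidableEq E] (A : Matrix m E F) (a b e : E) (α : F) :
    Matrix (m ⊕ Unit) (E ⊕ Fin 2) F :=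
  Matrix.of fun i j =>
    Sum.elim (fun x => splitMatrix A a b α i x)
      (fun k => if k = (0 : Fin 2) then zColumn α i
                else splitMatrix A a b α i e - zColumn α i) j

/-- A circuit of a matroid: a minimal dependent set. -/
def IsCircuit (M : Matroid α) (C : Set α) : Prop :=
  M.Dep C ∧ ∀ D, D ⊂ C → M.Indep D

/-- The (ℕ-valued) rank of a set in a matroid: the largest size of an independent subset. -/
noncomputable def rk (M : Matroid α) (X : Set α) : ℕ :=
  sSup {n | ∃ I, I ⊆ X ∧ M.Indep I ∧ I.ncard = n}

/-- Every element lies in some circuit. -/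
def Coloopless (M : Matroid α) : Prop :=
  ∀ x ∈ M.E, ∃ C, IsCircuit M C ∧ x ∈ C

/-- A simple matroid: every subset of the ground set with at most two elements is independent. -/
def SimpleMatroid (M : Matroid α) : Prop :=
  ∀ X ⊆ M.E, X.ncard ≤ 2 → M.Indep X

/-- A matroid is connected if every two distinct elements lie in a common circuit. -/
def ConnectedMatroid (M : Matroid α) : Prop :=
  ∀ x ∈ M.E, ∀ y ∈ M.E, x ≠ y → ∃ C, IsCircuit M C ∧ x ∈ C ∧ y ∈ C

/-- A `k`-separation of `M`: a partition `{S, T}` of the ground set with `|S|, |T| ≥ k` and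
`r(S) + r(T) - r(M) < k`. -/
def KSeparation (M : Matroid α) (k : ℕ) (S T : Set α) : Prop :=
  S ∪ T = M.E ∧ Disjoint S T ∧ k ≤ S.ncard ∧ k ≤ T.ncard ∧
    rk M S + rk M T < rk M M.E + k

/-- `M` is `n`-connected: it has no `k`-separation for `1 ≤ k ≤ n - 1`. -/
def NConnected (M : Matroid α) (n : ℕ) : Prop :=
  ∀ k S T, 1 ≤ k → k ≤ n - 1 → ¬ KSeparation M k S T

/-- A matroid is Eulerian if its ground set is a disjoint union of circuits. -/
def Eulerian (M : Matroid α) : Prop :=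
  ∃ (n : ℕ) (D : Fin n → Set α), (∀ i, IsCircuit M (D i)) ∧
    (∀ i j, i ≠ j → Disjoint (D i) (D j)) ∧ (⋃ i, D i) = M.E

/-- `C` carries a linear dependence of the columns of `A` with all coefficients nonzero
exactly on `C`, whose coefficients at `a` and `b` sum to zero. -/
def HasPDependence {m E F : Type*} [Semiring F] [Fintype E] (A : Matrix m E F)
    (a b : E) (C : Set E) : Prop :=
  ∃ c : E → F, (∀ x, x ∈ C ↔ c x ≠ 0) ∧ (∑ x, c x • Aᵀ x) = 0 ∧ c a + c b = 0

/-- A `p`-circuit of the vector matroid `M = M[A]` with respect to `a, b`. -/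
def IsPCircuit {m E F : Type*} [Semiring F] [Fintype E] (M : Matroid E) (A : Matrix m E F)
    (a b : E) (C : Set E) : Prop :=
  IsCircuit M C ∧ a ∈ C ∧ b ∈ C ∧ HasPDependence A a b C

/-- An `np`-circuit: a circuit meeting `{a, b}` that is not a `p`-circuit. -/
def IsNpCircuit {m E F : Type*} [Semiring F] [Fintype E] (M : Matroid E) (A : Matrix m E F)
    (a b : E) (C : Set E) : Prop :=
  IsCircuit M C ∧ (C ∩ {a, b}).Nonempty ∧ ¬ HasPDependence A a b C

/-
Every column `x` of `A_{a,b}` is `(A x, 0)` plus `0` or `1` times `z`, and since `e ∈ {a, b}`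
the column `γ = e - z` is `(A e, 0)`. Hence the column space of `A^e_{a,b}` is the column space
of `A`, padded by a zero entry, plus the line spanned by `z`; as `α ≠ 0`, `z` lies outside the
first summand, which adds exactly one to the dimension.
-/

open Submodule

section EsSplitting

variable {F m E : Type*} [Ring F]

noncomputable def padZero : (m → F) →ₗ[F] (m ⊕ Unit → F) :=
  (LinearEquiv.sumPiEquivProdPi F m Unit fun _ => F).symm.toLinearMap ∘ₗ LinearMap.inl F _ _

@[simp]
lemma padZero_apply_inl (v : m → F) (i : m) : padZero v (Sum.inl i) = v i := rfl

@[simp]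
lemma padZero_apply_inr (v : m → F) (u : Unit) : padZero v (Sum.inr u) = 0 := rfl

lemma padZero_injective : Function.Injective (padZero : (m → F) →ₗ[F] m ⊕ Unit → F) :=
  fun _ _ h => funext fun i => congrFun h (Sum.inl i)

lemma zColumn_notMem_map_padZero {α : F} (hα : α ≠ 0) (S : Submodule F (m → F)) :
    zColumn α ∉ S.map padZero := by
  rintro ⟨v, -, hv⟩
  exact hα (by simpa [zColumn] using (congrFun hv (Sum.inr ())).symm)

variable [DecidableEq E] (A : Matrix m E F) (a b : E) (α : F)

lemma splitMatrix_col (x : E) :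
    (splitMatrix A a b α).col x =
      padZero (A.col x) + (if x = a ∨ x = b then 1 else 0 : F) • zColumn α := by
  ext (i | u) <;> by_cases h : x = a ∨ x = b <;> simp [splitMatrix, zColumn, h]

lemma esMatrix_col_inl (e x : E) :
    (esMatrix A a b e α).col (Sum.inl x) = (splitMatrix A a b α).col x :=
  rfl

lemma esMatrix_col_inr_zero (e : E) : (esMatrix A a b e α).col (Sum.inr 0) = zColumn α := by
  ext i
  simp [esMatrix]

lemma esMatrix_col_inr_one {e : E} (he : e = a ∨ e = b) :
    (esMatrix A a b e α).col (Sum.inr 1) = padZero (A.col e) := by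
  have hγ : (esMatrix A a b e α).col (Sum.inr 1) = (splitMatrix A a b α).col e - zColumn α := by
    ext i
    simp [esMatrix]
  rw [hγ, splitMatrix_col, if_pos he, one_smul, add_sub_cancel_right]

lemma span_range_esMatrix_col {e : E} (he : e = a ∨ e = b) :
    span F (range (esMatrix A a b e α).col) =
      (span F (range A.col)).map padZero ⊔ span F {zColumn α} := by
  rw [map_span, ← span_union]
  apply span_eq_span
  · rintro _ ⟨x | k, rfl⟩
    · rw [esMatrix_col_inl, splitMatrix_col]
      exact add_mem (subset_span (.inl (mem_image_of_mem _ (mem_range_self x))))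
        (smul_mem _ _ (subset_span (.inr rfl)))
    · match k with
      | 0 =>
        rw [esMatrix_col_inr_zero]
        exact subset_span (.inr rfl)
      | 1 =>
        rw [esMatrix_col_inr_one A a b α he]
        exact subset_span (.inl (mem_image_of_mem _ (mem_range_self e)))
  · rintro _ (⟨_, ⟨x, rfl⟩, rfl⟩ | rfl)
    · have hx : padZero (A.col x) = (esMatrix A a b e α).col (Sum.inl x) -
          (if x = a ∨ x = b then 1 else 0 : F) • (esMatrix A a b e α).col (Sum.inr 0) := by
        rw [esMatrix_col_inl, splitMatrix_col, esMatrix_col_inr_zero, add_sub_cancel_right]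
      rw [hx]
      exact sub_mem (subset_span (mem_range_self _))
        (smul_mem _ _ (subset_span (mem_range_self _)))
    · rw [← esMatrix_col_inr_zero A a b α e]
      exact subset_span (mem_range_self _)

end EsSplitting

variable {m E : Type*} [Fintype m] [Fintype E] [DecidableEq E] {p : ℕ} [Fact p.Prime]

theorem rank_esMatrix_general (A : Matrix m E (ZMod p)) (a b e : E)
    (he : e = a ∨ e = b) (α : ZMod p) (hα : α ≠ 0) :
    (esMatrix A a b e α).rank = A.rank + 1 := by
  rw [Matrix.rank_eq_finrank_span_cols, Matrix.rank_eq_finrank_span_cols,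
    span_range_esMatrix_col A a b α he,
    finrank_sup_span_singleton (zColumn_notMem_map_padZero hα _),
    ← (equivMapOfInjective _ padZero_injective _).finrank_eq]

theorem rank_esMatrix (A : Matrix m E (ZMod p)) (a b e : E) (hab : a ≠ b)
    (he : e = a ∨ e = b) (α : ZMod p) (hα : α ≠ 0) :
    (esMatrix A a b e α).rank = A.rank + 1 :=
  rank_esMatrix_general A a b e he α hα
end

section
/- The es-splitting matroid M^e_{a,b} of a simple coloopless p-matroid M is never bipartite, i.e., it contains a circuit of odd cardinality. -/
/-!
Since `e ∈ {a, b}`, column `e` of the splitting matrix is `(Aₑ, α)`, while `z = (0, α)` and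
`γ = e - z = (Aₑ, 0)`. A simple matroid has no loops, so `Aₑ ≠ 0`; hence `z` and `γ` have disjoint
nonzero supports and are independent, and the relation `e = z + γ` makes `{e, z, γ}` a circuit
of size three.
-/

open Matrix Set

variable {α : Type*}

section LinearAlgebra

variable {ι R M : Type*} [Ring R] [AddCommGroup M] [Module R M]

theorem linearIndepOn_pair_iff_linearIndependent {v : ι → M} {i j : ι} (hij : i ≠ j) :
    LinearIndepOn R v {i, j} ↔ LinearIndependent R ![v i, v j] := by
  rw [LinearIndepOn.pair_iff v hij, LinearIndependent.pair_iff]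

theorem LinearIndependent.ne_of_eq_add [Nontrivial R] {v : ι → M} {x y z : ι}
    (hx : v x = v y + v z) (h : LinearIndependent R ![v y, v z]) : x ≠ y ∧ x ≠ z ∧ y ≠ z := by
  have hy : v y ≠ 0 := h.ne_zero 0
  have hz : v z ≠ 0 := h.ne_zero 1
  refine ⟨?_, ?_, ?_⟩
  · rintro rfl
    exact hz (by simpa using hx)
  · rintro rfl
    exact hy (by simpa using hx)
  · rintro rfl
    exact one_ne_zero (LinearIndependent.pair_iff.mp h 1 (-1) (by simp)).1

theorem linearIndependent_sumElim_pair {m n : Type*} [NoZeroDivisors R] {u : m → R}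
    {w : n → R} (hu : u ≠ 0) (hw : w ≠ 0) :
    LinearIndependent R ![Sum.elim u 0, Sum.elim 0 w] := by
  refine LinearIndependent.pair_iff.mpr fun s t hst => ⟨?_, ?_⟩
  · by_contra hs
    obtain ⟨i, hi⟩ := Function.ne_iff.mp hu
    exact hi (by simpa [hs] using congrFun hst (Sum.inl i))
  · by_contra ht
    obtain ⟨i, hi⟩ := Function.ne_iff.mp hw
    exact hi (by simpa [ht] using congrFun hst (Sum.inr i))

end LinearAlgebra

theorem isCircuit_triple {M : Matroid α} {x y z : α} (hdep : M.Dep {x, y, z})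
    (hxy : M.Indep {x, y}) (hxz : M.Indep {x, z}) (hyz : M.Indep {y, z}) :
    IsCircuit M {x, y, z} := by
  refine ⟨hdep, fun D hD => ?_⟩
  obtain ⟨w, hw, hwD⟩ := exists_of_ssubset hD
  rcases hw with rfl | rfl | rfl
  · exact hyz.subset fun d hd => by grind [hD.subset hd]
  · exact hxz.subset fun d hd => by grind [hD.subset hd]
  · exact hxy.subset fun d hd => by grind [hD.subset hd]

section VectorMatroid

variable {m E K : Type*} [DivisionRing K] {M : Matroid E} {A : Matrix m E K}

theorem IsVectorMatroid.col_ne_zero (hM : IsVectorMatroid M A) (hs : SimpleMatroid M) (x : E) :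
    Aᵀ x ≠ 0 :=
  ((hM.2 {x}).mp (hs {x} (by simp [hM.1]) (by simp))).ne_zero ⟨x, rfl⟩

theorem IsVectorMatroid.isCircuit_of_col_eq_add (hM : IsVectorMatroid M A) {x y z : E}
    (hx : Aᵀ x = Aᵀ y + Aᵀ z) (h : LinearIndependent K ![Aᵀ y, Aᵀ z]) :
    IsCircuit M {x, y, z} := by
  obtain ⟨hxy, hxz, hyz⟩ := h.ne_of_eq_add hx
  have indep_pair : ∀ {i j : E}, i ≠ j → LinearIndependent K ![Aᵀ i, Aᵀ j] → M.Indep {i, j} :=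
    fun hij hind => (hM.2 _).mpr ((linearIndepOn_pair_iff_linearIndependent hij).mpr hind)
  refine isCircuit_triple ⟨fun hI => ?_, by simp [hM.1]⟩ (indep_pair hxy ?_) (indep_pair hxz ?_)
    (indep_pair hyz h)
  · have hspan : Aᵀ x ∈ Submodule.span K (Aᵀ '' {y, z}) := hx ▸
      add_mem (Submodule.subset_span (mem_image_of_mem _ (by simp)))
        (Submodule.subset_span (mem_image_of_mem _ (by simp)))
    exact ((linearIndepOn_insert (by simp [hxy, hxz])).mp ((hM.2 _).mp hI)).2 hspan
  · rwa [hx, add_comm, LinearIndependent.pair_add_left_iff, LinearIndependent.pair_symm_iff]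
  · rwa [hx, LinearIndependent.pair_add_left_iff]

end VectorMatroid

section EsMatrix

variable {m E F : Type*} [Ring F] [DecidableEq E]

theorem esMatrix_transpose_inl_eq_add (A : Matrix m E F) (a b e : E) (α : F) :
    (esMatrix A a b e α)ᵀ (Sum.inl e) =
      (esMatrix A a b e α)ᵀ (Sum.inr 0) + (esMatrix A a b e α)ᵀ (Sum.inr 1) := by
  funext i
  simp [esMatrix]

theorem esMatrix_transpose_inr_zero (A : Matrix m E F) (a b e : E) (α : F) :
    (esMatrix A a b e α)ᵀ (Sum.inr 0) = Sum.elim (0 : m → F) (fun _ => α) := by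
  funext i
  rcases i with _ | _ <;> simp [esMatrix, zColumn]

theorem esMatrix_transpose_inr_one (A : Matrix m E F) {a b e : E} (he : e = a ∨ e = b)
    (α : F) : (esMatrix A a b e α)ᵀ (Sum.inr 1) = Sum.elim (Aᵀ e) 0 := by
  funext i
  rcases i with i | _
  · simp [esMatrix, splitMatrix, zColumn]
  · simp [esMatrix, splitMatrix, zColumn, he]

end EsMatrix

variable {m E : Type*} [Fintype m] [Fintype E] [DecidableEq E] {p : ℕ} [Fact p.Prime]

theorem esSplitting_not_bipartite_general (A : Matrix m E (ZMod p)) (a b e : E)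
    (he : e = a ∨ e = b) (α : ZMod p) (hα : α ≠ 0)
    (M : Matroid E) (hM : IsVectorMatroid M A)
    (hs : SimpleMatroid M)
    (M' : Matroid (E ⊕ Fin 2)) (hM' : IsVectorMatroid M' (esMatrix A a b e α)) :
    ∃ C : Set (E ⊕ Fin 2), IsCircuit M' C ∧ Odd C.ncard := by
  have hind : LinearIndependent (ZMod p)
      ![(esMatrix A a b e α)ᵀ (Sum.inr 0), (esMatrix A a b e α)ᵀ (Sum.inr 1)] := by
    rw [esMatrix_transpose_inr_zero, esMatrix_transpose_inr_one A he,
      LinearIndependent.pair_symm_iff]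
    exact linearIndependent_sumElim_pair (hM.col_ne_zero hs e) (Function.ne_iff.mpr ⟨(), hα⟩)
  have hsum := esMatrix_transpose_inl_eq_add A a b e α
  obtain ⟨h₁, h₂, h₃⟩ := hind.ne_of_eq_add hsum
  refine ⟨_, hM'.isCircuit_of_col_eq_add hsum hind, ?_⟩
  rw [ncard_eq_three.mpr ⟨_, _, _, h₁, h₂, h₃, rfl⟩]
  exact odd_two_mul_add_one 1

theorem esSplitting_not_bipartite (A : Matrix m E (ZMod p)) (a b e : E)
    (he : e = a ∨ e = b) (α : ZMod p) (hα : α ≠ 0)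
    (M : Matroid E) (hM : IsVectorMatroid M A)
    (hs : SimpleMatroid M) (hc : Coloopless M)
    (M' : Matroid (E ⊕ Fin 2)) (hM' : IsVectorMatroid M' (esMatrix A a b e α)) :
    ∃ C : Set (E ⊕ Fin 2), IsCircuit M' C ∧ Odd C.ncard :=
  esSplitting_not_bipartite_general A a b e he α hα M hM hs M' hM'
end

section
/- Let M be a p-matroid with rank function r and let M^e_{a,b} be its es-splitting matroid with rank function r'. For every subset X ⊆ E(M), r'(X ∪ {z}) = r(X) + 1. -/
open Matrix Set

variable {α : Type*}

/-! Deleting the last row maps the columns of `A^e_{a,b}` onto those of `A`, with kernel spanned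
by `z`. Hence `I ⊆ E` is independent in `M` exactly when `I ∪ {z}` is independent in
`M^e_{a,b}`: on `E`, the matroid `M` is the contraction of `M^e_{a,b}` by the nonloop `z`, and
ranks shift by one. -/

theorem linearIndepOn_insert_iff_of_ker_eq_span {K V W ι : Type*} [Field K] [AddCommGroup V]
    [Module K V] [AddCommGroup W] [Module K W] {π : V →ₗ[K] W} {f : ι → V} {i : ι} {s : Set ι}
    (his : i ∉ s) (hfi : f i ≠ 0) (hker : LinearMap.ker π = Submodule.span K {f i}) :
    LinearIndepOn K f (insert i s) ↔ LinearIndepOn K (π ∘ f) s := by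
  have hinj : Set.InjOn ((LinearMap.ker π).liftQ π le_rfl) Set.univ :=
    (LinearMap.ker_eq_bot.mp (Submodule.ker_liftQ_eq_bot _ _ _ le_rfl)).injOn
  rw [← Set.singleton_union, linearIndepOn_union_iff_quotient (by simpa using his),
    linearIndepOn_singleton_iff, Set.image_singleton, ← hker, and_iff_right hfi,
    ← LinearMap.linearIndepOn_iff_of_injOn _ (hinj.mono (Set.subset_univ _))]
  rfl

theorem ker_funLeft_inl_eq_span_zColumn {m K : Type*} [Field K] {α : K} (hα : α ≠ 0) :
    LinearMap.ker (LinearMap.funLeft K K (Sum.inl : m → m ⊕ Unit)) =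
      Submodule.span K {zColumn α} := by
  ext x
  rw [LinearMap.mem_ker, Submodule.mem_span_singleton]
  constructor
  · intro hx
    refine ⟨x (Sum.inr ()) * α⁻¹, funext fun j => ?_⟩
    rcases j with j | ⟨⟨⟩⟩
    · simpa [zColumn] using (congrFun hx j).symm
    · simp [zColumn, hα]
  · rintro ⟨c, rfl⟩
    ext j
    simp [zColumn]

theorem colIndep_esMatrix_image_inl_union_z_iff {m E K : Type*} [Field K] [DecidableEq E]
    (A : Matrix m E K) (a b e : E) {α : K} (hα : α ≠ 0) (I : Set E) :
    ColIndep (esMatrix A a b e α) (Sum.inl '' I ∪ {Sum.inr 0}) ↔ ColIndep A I := by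
  have hz : (esMatrix A a b e α)ᵀ (Sum.inr 0) = zColumn α := by
    ext i
    simp [esMatrix]
  have hz_ne : zColumn (m := m) α ≠ 0 := fun h => hα (congrFun h (Sum.inr ()))
  change LinearIndepOn K (fun j => (esMatrix A a b e α)ᵀ j) _ ↔
    LinearIndepOn K (fun x => Aᵀ x) I
  rw [Set.union_singleton, linearIndepOn_insert_iff_of_ker_eq_span (by simp) (hz ▸ hz_ne)
    (hz ▸ ker_funLeft_inl_eq_span_zColumn hα)]
  exact ⟨fun h => h.comp_of_image Sum.inl_injective.injOn, fun h => h.image_of_comp Sum.inl _⟩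

theorem eRk_image_union_singleton_eq_add_one {α β : Type*} {M : Matroid α} {N : Matroid β}
    {f : α → β} {z : β} (hf : f.Injective) (hz : z ∉ Set.range f)
    (hindep : ∀ I, N.Indep (f '' I ∪ {z}) ↔ M.Indep I) (X : Set α) :
    N.eRk (f '' X ∪ {z}) = M.eRk X + 1 := by
  have hcard (I : Set α) : (f '' I ∪ {z}).encard = I.encard + 1 := by
    rw [Set.encard_union_eq (by simpa using fun h => hz (Set.image_subset_range f I h)),
      hf.encard_image, Set.encard_singleton]
  refine le_antisymm ?_ ?_
  · have hz_indep : N.Indep {z} := by simpa using (hindep ∅).2 M.empty_indep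
    obtain ⟨J, hJ, hzJ⟩ := hz_indep.subset_isBasis'_of_subset
      (Set.subset_union_right (s := f '' X))
    have hJeq : J = f '' (f ⁻¹' J) ∪ {z} := by
      rw [Set.image_preimage_eq_inter_range]
      ext y
      refine ⟨fun hy => ?_, ?_⟩
      · rcases hJ.subset hy with ⟨x, -, rfl⟩ | rfl
        exacts [Or.inl ⟨hy, x, rfl⟩, Or.inr rfl]
      · rintro (⟨hy, -⟩ | rfl)
        exacts [hy, hzJ rfl]
    have hJX : f ⁻¹' J ⊆ X := by
      intro x hx
      rcases hJ.subset hx with hx | hx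
      · exact hf.mem_set_image.mp hx
      · exact absurd ⟨x, hx⟩ hz
    rw [← hJ.encard_eq_eRk, hJeq, hcard]
    gcongr
    exact ((hindep _).1 (hJeq ▸ hJ.indep)).encard_le_eRk_of_subset hJX
  · obtain ⟨I, hI⟩ := M.exists_isBasis' X
    rw [← hI.encard_eq_eRk, ← hcard]
    exact ((hindep I).2 hI.indep).encard_le_eRk_of_subset
      (Set.union_subset_union_left _ (Set.image_mono hI.subset))

theorem cast_rk_eq_eRk {α : Type*} [Finite α] (M : Matroid α) (X : Set α) :
    (rk M X : ℕ∞) = M.eRk X := by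
  obtain ⟨I, hI⟩ := M.exists_isBasis' X
  rw [← hI.encard_eq_eRk, ← I.toFinite.cast_ncard_eq, Nat.cast_inj]
  refine IsGreatest.csSup_eq ⟨⟨I, hI.subset, hI.indep, rfl⟩, ?_⟩
  rintro n ⟨J, hJX, hJ, rfl⟩
  have hJI := hJ.encard_le_eRk_of_subset hJX
  rwa [← hI.encard_eq_eRk, ← J.toFinite.cast_ncard_eq, ← I.toFinite.cast_ncard_eq,
    Nat.cast_le] at hJI

variable {m E : Type*} [Fintype m] [Fintype E] [DecidableEq E] {p : ℕ} [Fact p.Prime]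

theorem esSplitting_rank_union_z_general (A : Matrix m E (ZMod p)) (a b e : E)
    (α : ZMod p) (hα : α ≠ 0)
    (M : Matroid E) (hM : IsVectorMatroid M A)
    (M' : Matroid (E ⊕ Fin 2)) (hM' : IsVectorMatroid M' (esMatrix A a b e α)) :
    ∀ X : Set E, rk M' (Sum.inl '' X ∪ {Sum.inr 0}) = rk M X + 1 := by
  intro X
  have hindep (I : Set E) : M'.Indep (Sum.inl '' I ∪ {Sum.inr 0}) ↔ M.Indep I := by
    rw [hM'.2, hM.2]
    exact colIndep_esMatrix_image_inl_union_z_iff A a b e hα I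
  have hrk := eRk_image_union_singleton_eq_add_one Sum.inl_injective (by simp) hindep X
  rw [← cast_rk_eq_eRk, ← cast_rk_eq_eRk] at hrk
  exact_mod_cast hrk

theorem esSplitting_rank_union_z (A : Matrix m E (ZMod p)) (a b e : E)
    (he : e = a ∨ e = b) (α : ZMod p) (hα : α ≠ 0)
    (M : Matroid E) (hM : IsVectorMatroid M A)
    (M' : Matroid (E ⊕ Fin 2)) (hM' : IsVectorMatroid M' (esMatrix A a b e α)) :
    ∀ X : Set E, rk M' (Sum.inl '' X ∪ {Sum.inr 0}) = rk M X + 1 :=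
  esSplitting_rank_union_z_general A a b e α hα M hM M' hM'
end

section
/- Let M be a p-matroid with rank function r, M^e_{a,b} its es-splitting matroid with rank function r', and cl the closure operator of M. For every X ⊆ E(M): r'(X ∪ {z, γ}) = r(X) + 1 if e ∈ cl(X), and r'(X ∪ {z, γ}) = r(X) + 2 if e ∉ cl(X). -/
open Matrix Set

variable {α : Type*}

variable {m E : Type*} [Fintype m] [Fintype E] [DecidableEq E] {p : ℕ} [Fact p.Prime]

/-! In `A^e_{a,b}` the column of `x ∈ E` is the column of `A` padded by a zero, plus `z` when
`x ∈ {a, b}`; since `e ∈ {a, b}`, the column `γ = e - z` is exactly the padded column of `e`.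
So, modulo `z`, the columns of `X ∪ {z, γ}` span the padded copy of `span A(X ∪ {e})`, and `z`
lies outside the padded subspace: `r'(X ∪ {z, γ}) = r(X ∪ {e}) + 1`. Finally
`r(X ∪ {e})` is `r(X)` or `r(X) + 1` according to whether `e ∈ cl(X)`. -/

open Submodule Module

theorem LinearIndepOn.finrank_span_image_eq_ncard {ι K V : Type*} [DivisionRing K]
    [AddCommGroup V] [Module K V] {f : ι → V} {s : Set ι} (hf : LinearIndepOn K f s)
    (hs : s.Finite) : finrank K (span K (f '' s)) = s.ncard := by
  have := hs.fintype
  rw [Set.image_eq_range, finrank_span_eq_card hf, ← Nat.card_coe_set_eq,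
    Nat.card_eq_fintype_card]

theorem Submodule.span_image_sup_eq_of_sub_mem {ι K V : Type*} [Ring K] [AddCommGroup V]
    [Module K V] {f g : ι → V} {s : Set ι} {W : Submodule K V}
    (h : ∀ x ∈ s, f x - g x ∈ W) : span K (f '' s) ⊔ W = span K (g '' s) ⊔ W := by
  suffices key : ∀ f g : ι → V, (∀ x ∈ s, f x - g x ∈ W) →
      span K (f '' s) ⊔ W ≤ span K (g '' s) ⊔ W from
    le_antisymm (key f g h) (key g f fun x hx => by simpa using W.neg_mem (h x hx))
  intro f g h
  refine sup_le (span_le.2 ?_) le_sup_right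
  rintro _ ⟨x, hx, rfl⟩
  rw [← sub_add_cancel (f x) (g x)]
  exact add_mem (mem_sup_right (h x hx)) (mem_sup_left (subset_span ⟨x, hx, rfl⟩))

namespace IsVectorMatroid

variable {m E F : Type*} [Field F] {M : Matroid E} {A : Matrix m E F}

theorem indep_iff (hM : IsVectorMatroid M A) {I : Set E} :
    M.Indep I ↔ LinearIndepOn F (fun x => Aᵀ x) I :=
  hM.2 I

theorem mem_closure_iff_of_indep (hM : IsVectorMatroid M A) {I : Set E} (hI : M.Indep I)
    (x : E) : x ∈ M.closure I ↔ Aᵀ x ∈ span F (Aᵀ '' I) := by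
  rw [hI.mem_closure_iff', hM.1, hM.indep_iff]
  exact (and_iff_right (mem_univ x)).trans (hM.indep_iff.1 hI).mem_span_iff.symm

theorem span_image_eq_of_isBasis (hM : IsVectorMatroid M A) {I X : Set E}
    (hI : M.IsBasis I X) : span F (Aᵀ '' I) = span F (Aᵀ '' X) := by
  refine le_antisymm (span_mono (image_mono hI.subset)) (span_le.2 ?_)
  rintro _ ⟨x, hx, rfl⟩
  refine (hM.mem_closure_iff_of_indep hI.indep x).1 ?_
  rw [hI.closure_eq_closure]
  exact M.subset_closure X (hM.1 ▸ subset_univ X) hx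

theorem mem_closure_iff (hM : IsVectorMatroid M A) (X : Set E) (x : E) :
    x ∈ M.closure X ↔ Aᵀ x ∈ span F (Aᵀ '' X) := by
  obtain ⟨I, hI⟩ := M.exists_isBasis X (hM.1 ▸ subset_univ X)
  rw [← hI.closure_eq_closure, hM.mem_closure_iff_of_indep hI.indep,
    hM.span_image_eq_of_isBasis hI]

variable [Finite m] [Finite E]

theorem rk_eq_finrank (hM : IsVectorMatroid M A) (X : Set E) :
    rk M X = finrank F (span F (Aᵀ '' X)) := by
  refine IsGreatest.csSup_eq ⟨?_, ?_⟩
  · obtain ⟨I, hI⟩ := M.exists_isBasis X (hM.1 ▸ subset_univ X)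
    refine ⟨I, hI.subset, hI.indep, ?_⟩
    rw [← hM.span_image_eq_of_isBasis hI,
      (hM.indep_iff.1 hI.indep).finrank_span_image_eq_ncard I.toFinite]
  · rintro _ ⟨I, hIX, hI, rfl⟩
    rw [← (hM.indep_iff.1 hI).finrank_span_image_eq_ncard I.toFinite]
    exact finrank_mono (span_mono (image_mono hIX))

theorem rk_insert_of_mem_closure (hM : IsVectorMatroid M A) {X : Set E} {x : E}
    (hx : x ∈ M.closure X) : rk M (insert x X) = rk M X := by
  have himage : Aᵀ '' insert x X = insert (Aᵀ x) (Aᵀ '' X) := image_insert_eq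
  rw [hM.mem_closure_iff] at hx
  rw [hM.rk_eq_finrank, hM.rk_eq_finrank, himage, span_insert_eq_span hx]

theorem rk_insert_of_notMem_closure (hM : IsVectorMatroid M A) {X : Set E} {x : E}
    (hx : x ∉ M.closure X) : rk M (insert x X) = rk M X + 1 := by
  have himage : Aᵀ '' insert x X = insert (Aᵀ x) (Aᵀ '' X) := image_insert_eq
  rw [hM.mem_closure_iff] at hx
  rw [hM.rk_eq_finrank, hM.rk_eq_finrank, himage, span_insert, sup_comm,
    finrank_sup_span_singleton hx]

end IsVectorMatroid

section ZeroExtend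

variable {m R : Type*} [Semiring R]

def zeroExtend : (m → R) →ₗ[R] (m ⊕ Unit → R) where
  toFun v := Sum.elim v 0
  map_add' _ _ := by ext (i | i) <;> simp
  map_smul' _ _ := by ext (i | i) <;> simp

theorem zeroExtend_injective : Function.Injective (zeroExtend : (m → R) →ₗ[R] _) :=
  fun _ _ h => funext fun i => congrFun h (Sum.inl i)

theorem zColumn_notMem_range_zeroExtend {α : R} (hα : α ≠ 0) :
    zColumn α ∉ LinearMap.range (zeroExtend : (m → R) →ₗ[R] _) := by
  rintro ⟨v, hv⟩
  exact hα (congrFun hv (Sum.inr ())).symm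

theorem finrank_map_zeroExtend_sup_span_zColumn {F : Type*} [Field F] [Finite m] {α : F}
    (hα : α ≠ 0) (P : Submodule F (m → F)) :
    finrank F ↥(P.map zeroExtend ⊔ F ∙ zColumn α) = finrank F P + 1 := by
  have hz : zColumn α ∉ P.map zeroExtend := fun h =>
    zColumn_notMem_range_zeroExtend hα (LinearMap.map_le_range h)
  rw [finrank_sup_span_singleton hz,
    LinearEquiv.finrank_eq (equivMapOfInjective _ zeroExtend_injective P).symm]

end ZeroExtend

section EsSplitting

variable {m E F : Type*} [Ring F] [DecidableEq E]

theorem splitMatrix_transpose_apply (A : Matrix m E F) (a b : E) (α : F) (x : E) :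
    (splitMatrix A a b α)ᵀ x =
      zeroExtend (Aᵀ x) + if x = a ∨ x = b then zColumn α else 0 := by
  ext (i | i) <;> split_ifs <;> simp_all [splitMatrix, zeroExtend, zColumn]

variable (A : Matrix m E F) (a b e : E) (α : F)

theorem esMatrix_transpose_inl (x : E) :
    (esMatrix A a b e α)ᵀ (Sum.inl x) = (splitMatrix A a b α)ᵀ x := rfl

theorem esMatrix_transpose_z : (esMatrix A a b e α)ᵀ (Sum.inr 0) = zColumn α := by
  ext i; simp [esMatrix]

theorem esMatrix_transpose_gamma (he : e = a ∨ e = b) :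
    (esMatrix A a b e α)ᵀ (Sum.inr 1) = zeroExtend (Aᵀ e) := by
  have hγ : (esMatrix A a b e α)ᵀ (Sum.inr 1) = (splitMatrix A a b α)ᵀ e - zColumn α := by
    ext i; simp [esMatrix]
  rw [hγ, splitMatrix_transpose_apply, if_pos he, add_sub_cancel_right]

theorem esMatrix_transpose_inl_sub_mem_span_zColumn (x : E) :
    (esMatrix A a b e α)ᵀ (Sum.inl x) - zeroExtend (Aᵀ x) ∈ F ∙ zColumn α := by
  rw [esMatrix_transpose_inl, splitMatrix_transpose_apply, add_sub_cancel_left]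
  split_ifs
  exacts [mem_span_singleton_self _, zero_mem _]

theorem span_esMatrix_image_union_z_gamma (he : e = a ∨ e = b) (X : Set E) :
    span F ((esMatrix A a b e α)ᵀ '' (Sum.inl '' X ∪ {Sum.inr 0, Sum.inr 1})) =
      (span F (Aᵀ '' insert e X)).map zeroExtend ⊔ F ∙ zColumn α := by
  -- `rw` does not see `Matrix` as a function type inside `Set.image`; hence the lambdas.
  change span F ((fun j => (esMatrix A a b e α)ᵀ j) '' _) =
    (span F ((fun x => Aᵀ x) '' insert e X)).map zeroExtend ⊔ _
  rw [image_union, image_image, image_pair, esMatrix_transpose_z,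
    esMatrix_transpose_gamma A a b e α he, span_union, span_insert, map_span, image_image,
    image_insert_eq, span_insert, ← sup_assoc,
    span_image_sup_eq_of_sub_mem fun x _ =>
      esMatrix_transpose_inl_sub_mem_span_zColumn A a b e α x]
  exact (sup_right_comm _ _ _).trans (congrArg (· ⊔ _) (sup_comm _ _))

end EsSplitting

theorem rk_esMatrix_union_z_gamma {m E F : Type*} [Field F] [Finite m] [Finite E]
    [DecidableEq E] {A : Matrix m E F} {a b e : E} {α : F} {M : Matroid E}
    (hM : IsVectorMatroid M A) {M' : Matroid (E ⊕ Fin 2)}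
    (hM' : IsVectorMatroid M' (esMatrix A a b e α)) (he : e = a ∨ e = b) (hα : α ≠ 0)
    (X : Set E) :
    rk M' (Sum.inl '' X ∪ {Sum.inr 0, Sum.inr 1}) = rk M (insert e X) + 1 := by
  rw [hM'.rk_eq_finrank, span_esMatrix_image_union_z_gamma A a b e α he,
    finrank_map_zeroExtend_sup_span_zColumn hα, hM.rk_eq_finrank]

theorem esSplitting_rank_union_z_gamma (A : Matrix m E (ZMod p)) (a b e : E)
    (he : e = a ∨ e = b) (α : ZMod p) (hα : α ≠ 0)
    (M : Matroid E) (hM : IsVectorMatroid M A)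
    (M' : Matroid (E ⊕ Fin 2)) (hM' : IsVectorMatroid M' (esMatrix A a b e α)) :
    ∀ X : Set E,
      (e ∈ M.closure X →
        rk M' (Sum.inl '' X ∪ {Sum.inr 0, Sum.inr 1}) = rk M X + 1) ∧
      (e ∉ M.closure X →
        rk M' (Sum.inl '' X ∪ {Sum.inr 0, Sum.inr 1}) = rk M X + 2) := by
  intro X
  rw [rk_esMatrix_union_z_gamma hM hM' he hα X]
  exact ⟨fun h => by rw [hM.rk_insert_of_mem_closure h],
    fun h => by rw [hM.rk_insert_of_notMem_closure h]⟩
end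

section
/- Let M be a p-matroid with rank function r and M^e_{a,b} its es-splitting matroid with rank function r'. For X ⊆ E(M), r'(X) = r(X) + 1 if X contains an np-circuit of M, and r'(X) = r(X) otherwise. -/
open Matrix Set

variable {α : Type*}

/- ### Auxiliary lemmas -/

lemma linComb_eq_sum {E' F V : Type*} [Fintype E'] [Field F] [AddCommGroup V] [Module F V]
    (f : E' → V) (l : E' →₀ F) :
    Finsupp.linearCombination F f l = ∑ x, l x • f x := by
  rw [Finsupp.linearCombination_apply, Finsupp.sum_fintype]
  intro i; simp

lemma colIndep_iff_fun {m' E' F : Type*} [Fintype E'] [Field F] (B : Matrix m' E' F) (S : Set E') :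
    ColIndep B S ↔ ∀ c : E' → F, (∀ x ∉ S, c x = 0) → (∑ x, c x • Bᵀ x) = 0 → c = 0 := by
  have h0 : ColIndep B S ↔ LinearIndependent F (Bᵀ ∘ ((↑) : S → E')) := Iff.rfl
  rw [h0]; refine (linearIndependent_comp_subtype_iff.trans linearIndepOn_iff).trans ?_
  constructor
  · intro h c hc hsum
    have h1 : (Finsupp.equivFunOnFinite.symm c) ∈ Finsupp.supported F F S :=
      (Finsupp.mem_supported' _ _).mpr (by intro x hx; simpa using hc x hx)
    have h2 : Finsupp.linearCombination F Bᵀ (Finsupp.equivFunOnFinite.symm c) = 0 := by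
      rw [linComb_eq_sum (f := Bᵀ)]; simpa using hsum
    have := h _ h1 h2
    have h3 : Finsupp.equivFunOnFinite.symm c = 0 := by simpa using this
    have := congrArg (⇑Finsupp.equivFunOnFinite) h3
    exact (by simpa using this : c = Finsupp.equivFunOnFinite 0).trans rfl
  · intro h l hl hsum
    have := h l (fun x hx => (Finsupp.mem_supported' _ _).mp hl x hx)
      (by rw [← linComb_eq_sum (f := Bᵀ)]; exact hsum)
    ext x; exact congrFun this x

lemma mem_span_iff_fun {E' F V : Type*} [Fintype E'] [Field F] [AddCommGroup V] [Module F V]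
    (f : E' → V) (X : Set E') (v : V) :
    v ∈ Submodule.span F (f '' X) ↔
      ∃ c : E' → F, (∀ x ∉ X, c x = 0) ∧ ∑ x, c x • f x = v := by
  rw [Finsupp.mem_span_image_iff_linearCombination]
  constructor
  · rintro ⟨l, hl, rfl⟩
    exact ⟨l, fun x hx => (Finsupp.mem_supported' _ _).mp hl x hx, (linComb_eq_sum f l).symm⟩
  · rintro ⟨c, hc, rfl⟩
    refine ⟨Finsupp.equivFunOnFinite.symm c, (Finsupp.mem_supported' _ _).mpr (by simpa using hc), ?_⟩
    rw [linComb_eq_sum]; simp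

lemma rk_eq_finrank {m' E' F : Type*} [Fintype m'] [Fintype E'] [Field F]
    {M : Matroid E'} {B : Matrix m' E' F} (hM : IsVectorMatroid M B) (X : Set E') :
    rk M X = Module.finrank F (Submodule.span F (Bᵀ '' X)) := by
  classical
  set r := Module.finrank F (Submodule.span F (Bᵀ '' X)) with hr
  have hub : ∀ n ∈ {n | ∃ I, I ⊆ X ∧ M.Indep I ∧ I.ncard = n}, n ≤ r := by
    rintro n ⟨I, hIX, hI, rfl⟩
    have hci : ColIndep B I := (hM.2 I).mp hI
    have hres : LinearIndependent F (fun i : I =>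
        (⟨Bᵀ i.1, Submodule.subset_span ⟨i.1, hIX i.2, rfl⟩⟩ : Submodule.span F (Bᵀ '' X))) :=
      LinearIndependent.of_comp (Submodule.span F (Bᵀ '' X)).subtype hci
    haveI : Fintype I := I.toFinite.fintype
    have hcard := hres.fintype_card_le_finrank
    rwa [Set.ncard_eq_toFinset_card', Set.toFinset_card]
  have hne : (0 : ℕ) ∈ {n | ∃ I, I ⊆ X ∧ M.Indep I ∧ I.ncard = n} := by
    refine ⟨∅, Set.empty_subset _, (hM.2 ∅).mpr ?_, by simp⟩
    exact linearIndependent_empty_type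
  have hmem : r ∈ {n | ∃ I, I ⊆ X ∧ M.Indep I ∧ I.ncard = n} := by
    obtain ⟨b, hbsub, hbspan, hbind⟩ := exists_linearIndependent F (Bᵀ '' X)
    have hbfin : b.Finite := ((X.toFinite.image Bᵀ).subset hbsub)
    haveI : Fintype b := hbfin.fintype
    have hsel : ∀ v : b, ∃ x, x ∈ X ∧ Bᵀ x = v.1 := fun v => hbsub v.2
    choose g hg1 hg2 using hsel
    have hginj : Function.Injective g := by
      intro v w hvw
      apply Subtype.ext
      rw [← hg2 v, ← hg2 w, hvw]
    refine ⟨Set.range g, ?_, ?_, ?_⟩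
    · rintro _ ⟨v, rfl⟩; exact hg1 v
    · rw [hM.2]
      unfold ColIndep
      rw [← linearIndependent_equiv (Equiv.ofInjective g hginj)]
      have heq : (fun i : Set.range g => Bᵀ i.1) ∘ (Equiv.ofInjective g hginj) =
          fun v : b => (v.1 : _) := by
        funext v
        simp [hg2 v]
      rw [heq]
      exact hbind
    · have h1 : (Set.range g).ncard = Fintype.card b := by
        rw [← Set.image_univ, Set.ncard_image_of_injective _ hginj, Set.ncard_univ,
          Nat.card_eq_fintype_card]
      have h2 : r = Fintype.card b := by
        rw [hr, ← hbspan, finrank_span_set_eq_card hbind, Set.toFinset_card]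
      rw [h1, h2]
  exact le_antisymm (csSup_le ⟨0, hne⟩ hub) (le_csSup ⟨r, hub⟩ hmem)

lemma finrank_split_eq {m' E' F : Type*} [Fintype m'] [Fintype E'] [Field F]
    (s : E' → (m' ⊕ Unit → F)) (t : E' → (m' → F))
    (hst : ∀ x i, s x (Sum.inl i) = t x i) (X : Set E') :
    (¬(∃ c : E' → F, (∀ x ∉ X, c x = 0) ∧ ∑ x, c x • t x = 0 ∧ ∑ x, c x • s x ≠ 0) →
      Module.finrank F (Submodule.span F (s '' X)) =
        Module.finrank F (Submodule.span F (t '' X))) ∧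
    ((∃ c : E' → F, (∀ x ∉ X, c x = 0) ∧ ∑ x, c x • t x = 0 ∧ ∑ x, c x • s x ≠ 0) →
      Module.finrank F (Submodule.span F (s '' X)) =
        Module.finrank F (Submodule.span F (t '' X)) + 1) := by
  classical
  set π : (m' ⊕ Unit → F) →ₗ[F] (m' → F) := LinearMap.funLeft F F Sum.inl with hπ
  have hπs : ∀ x, π (s x) = t x := fun x => funext fun i => hst x i
  set W := Submodule.span F (s '' X) with hW
  set φ : W →ₗ[F] (m' → F) := π.comp W.subtype with hφ
  have hsum : ∀ c : E' → F, π (∑ x, c x • s x) = ∑ x, c x • t x := by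
    intro c; rw [map_sum]; congr 1; funext x; rw [LinearMap.map_smul, hπs]
  have hrange : LinearMap.range φ = Submodule.span F (t '' X) := by
    have him : π '' (s '' X) = t '' X := by
      rw [Set.image_image]
      exact Set.image_congr fun x _ => hπs x
    rw [hφ, LinearMap.range_comp, Submodule.range_subtype, hW, Submodule.map_span, him]
  have hrn := LinearMap.finrank_range_add_finrank_ker φ
  constructor
  · intro hP
    have hbot : LinearMap.ker φ = ⊥ := by
      rw [Submodule.eq_bot_iff]
      rintro ⟨v, hvW⟩ hz
      have hπv : π v = 0 := hz
      obtain ⟨c, hcX, hcv⟩ := (mem_span_iff_fun s X v).mp hvW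
      have hct : ∑ x, c x • t x = 0 := by rw [← hsum, hcv, hπv]
      have hzero : ∑ x, c x • s x = 0 := by
        by_contra h; exact hP ⟨c, hcX, hct, h⟩
      have hv0 : v = 0 := by rw [← hcv]; exact hzero
      exact Subtype.ext (by simpa using hv0)
    rw [← hrn, hrange, hbot, finrank_bot, add_zero]
  · rintro ⟨c, hcX, hct, hcs⟩
    set v := ∑ x, c x • s x with hv
    have hvW : v ∈ W := (mem_span_iff_fun s X v).mpr ⟨c, hcX, rfl⟩
    have hπv : π v = 0 := by rw [hv, hsum, hct]
    have hmem : (⟨⟨v, hvW⟩, show φ ⟨v, hvW⟩ = 0 from hπv⟩ : LinearMap.ker φ) ≠ 0 := by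
      intro h
      apply hcs
      have := congrArg (fun z : LinearMap.ker φ => (z.1 : m' ⊕ Unit → F)) h
      simpa using this
    have h1le : 0 < Module.finrank F (LinearMap.ker φ) :=
      Module.finrank_pos_iff.mpr ⟨_, 0, hmem⟩
    have hψmem : ∀ z : LinearMap.ker φ,
        (W.subtype.comp (LinearMap.ker φ).subtype) z ∈ LinearMap.ker π := by
      rintro ⟨⟨w, hwW⟩, hwk⟩; exact hwk
    set ψ := LinearMap.codRestrict (LinearMap.ker π) _ hψmem with hψdef
    have hψinj : Function.Injective ψ := by
      rintro ⟨⟨w1, h1⟩, hk1⟩ ⟨⟨w2, h2⟩, hk2⟩ h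
      have hw : w1 = w2 := congrArg (fun z : LinearMap.ker π => (z : m' ⊕ Unit → F)) h
      exact Subtype.ext (Subtype.ext hw)
    set z0 : m' ⊕ Unit → F := Sum.elim (fun _ => 0) (fun _ => 1) with hz0
    have hkerπ : LinearMap.ker π = Submodule.span F {z0} := by
      ext w
      simp only [LinearMap.mem_ker, Submodule.mem_span_singleton]
      constructor
      · intro hw
        refine ⟨w (Sum.inr ()), ?_⟩
        funext j
        cases j with
        | inl i =>
          have hwi : w (Sum.inl i) = 0 := congrFun hw i
          simp [hz0, hwi]
        | inr u =>
          cases u; simp [hz0]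
      · rintro ⟨k, rfl⟩
        funext i
        simp [hπ, hz0, LinearMap.funLeft_apply]
    have hkercard : Module.finrank F (LinearMap.ker π) = 1 := by
      rw [hkerπ]
      refine finrank_span_singleton ?_
      intro h
      have := congrFun h (Sum.inr ())
      simp [hz0] at this
    have hle1 : Module.finrank F (LinearMap.ker φ) ≤ 1 := by
      rw [← hkercard]
      exact LinearMap.finrank_le_finrank_of_injective hψinj
    have hone : Module.finrank F (LinearMap.ker φ) = 1 := le_antisymm hle1 h1le
    rw [← hrn, hrange, hone]

lemma split_sum_proj {m E : Type*} [Fintype m] [Fintype E] [DecidableEq E] {F : Type*} [Field F]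
    (A : Matrix m E F) (a b : E) (α : F) (c : E → F)
    (h : ∑ x, c x • (splitMatrix A a b α)ᵀ x = 0) : ∑ x, c x • Aᵀ x = 0 := by
  funext i
  have := congrFun h (Sum.inl i)
  simpa [splitMatrix, Finset.sum_apply] using this

lemma circuit_iff_witness {m E : Type*} [Fintype m] [Fintype E] [DecidableEq E] {F : Type*} [Field F]
    (A : Matrix m E F) (a b : E) (α : F)
    (M : Matroid E) (hM : IsVectorMatroid M A) (X : Set E) :
    (∃ C, C ⊆ X ∧ IsCircuit M C ∧ ColIndep (splitMatrix A a b α) C) ↔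
      ∃ c : E → F, (∀ x ∉ X, c x = 0) ∧ (∑ x, c x • Aᵀ x) = 0 ∧
        (∑ x, c x • (splitMatrix A a b α)ᵀ x) ≠ 0 := by
  classical
  constructor
  · rintro ⟨C, hCX, ⟨hdep, _⟩, hsplit⟩
    have hnind : ¬ ColIndep A C := fun h => (Matroid.dep_iff.mp hdep).1 ((hM.2 C).mpr h)
    rw [colIndep_iff_fun] at hnind
    push_neg at hnind
    obtain ⟨c, hcC, hct, hc0⟩ := hnind
    refine ⟨c, fun x hx => hcC x (fun h => hx (hCX h)), hct, ?_⟩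
    intro hs
    exact hc0 ((colIndep_iff_fun _ C).mp hsplit c hcC hs)
  · rintro ⟨c, hc⟩
    suffices H : ∀ n : ℕ, ∀ c : E → F, (Function.support c).ncard = n →
        (∀ x ∉ X, c x = 0) → (∑ x, c x • Aᵀ x) = 0 →
        (∑ x, c x • (splitMatrix A a b α)ᵀ x) ≠ 0 →
        ∃ C, C ⊆ X ∧ IsCircuit M C ∧ ColIndep (splitMatrix A a b α) C by
      exact H _ c rfl hc.1 hc.2.1 hc.2.2
    intro n
    induction n using Nat.strong_induction_on with
    | _ n ih =>
    intro c hcard hcX hct hcs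
    set C := Function.support c with hC
    have hCX : C ⊆ X := fun x hx => by
      by_contra hxX; exact hx (hcX x hxX)
    have hCfin : C.Finite := C.toFinite
    by_cases h2 : ∃ d : E → F, d ≠ 0 ∧ (∀ x ∉ C, d x = 0) ∧
        ∑ x, d x • (splitMatrix A a b α)ᵀ x = 0
    · obtain ⟨d, hd0, hdC, hds⟩ := h2
      obtain ⟨x₀, hx₀⟩ : ∃ x₀, d x₀ ≠ 0 := by
        by_contra h; push_neg at h; exact hd0 (funext h)
      have hx₀C : x₀ ∈ C := by by_contra h; exact hx₀ (hdC x₀ h)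
      have hdt : ∑ x, d x • Aᵀ x = 0 := split_sum_proj A a b α d hds
      set k := c x₀ / d x₀ with hk
      set c' := fun x => c x - k * d x with hc'
      have hc'X : ∀ x ∉ X, c' x = 0 := fun x hx => by
        have h1 : c x = 0 := hcX x hx
        have h2 : d x = 0 := hdC x (fun h => hx (hCX h))
        simp [hc', h1, h2]
      have hc't : ∑ x, c' x • Aᵀ x = 0 := by
        have heq : ∑ x, c' x • Aᵀ x = (∑ x, c x • Aᵀ x) - k • ∑ x, d x • Aᵀ x := by
          rw [Finset.smul_sum, ← Finset.sum_sub_distrib]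
          congr 1; funext x; rw [sub_smul, smul_smul]
        rw [heq, hct, hdt, smul_zero, sub_zero]
      have hc's : ∑ x, c' x • (splitMatrix A a b α)ᵀ x ≠ 0 := by
        have heq : ∑ x, c' x • (splitMatrix A a b α)ᵀ x =
            (∑ x, c x • (splitMatrix A a b α)ᵀ x) - k • ∑ x, d x • (splitMatrix A a b α)ᵀ x := by
          rw [Finset.smul_sum, ← Finset.sum_sub_distrib]
          congr 1; funext x; rw [sub_smul, smul_smul]
        rw [heq, hds, smul_zero, sub_zero]
        exact hcs
      have hsupp : Function.support c' ⊆ C \ {x₀} := by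
        intro x hx
        refine ⟨?_, ?_⟩
        · by_contra hxC
          apply hx
          have h1 : c x = 0 := by
            by_contra h; exact hxC h
          have h2 : d x = 0 := hdC x hxC
          simp [hc', h1, h2]
        · intro hxx
          apply hx
          rw [Set.mem_singleton_iff] at hxx
          subst hxx
          simp only [hc', hk]
          rw [div_mul_cancel₀ _ hx₀]
          exact sub_self _
      refine ih ((Function.support c').ncard) ?_ c' rfl hc'X hc't hc's
      calc (Function.support c').ncard ≤ (C \ {x₀}).ncard :=
            Set.ncard_le_ncard hsupp hCfin.diff
        _ < C.ncard := Set.ncard_diff_singleton_lt_of_mem hx₀C hCfin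
        _ = n := hcard
    by_cases h1 : ∃ d : E → F, d ≠ 0 ∧ (∀ x ∉ C, d x = 0) ∧ (∑ x, d x • Aᵀ x) = 0 ∧
        Function.support d ⊂ C
    · obtain ⟨d, hd0, hdC, hdt, hdss⟩ := h1
      have hds : ∑ x, d x • (splitMatrix A a b α)ᵀ x ≠ 0 := fun h => h2 ⟨d, hd0, hdC, h⟩
      refine ih ((Function.support d).ncard) ?_ d rfl
        (fun x hx => hdC x (fun h => hx (hCX h))) hdt hds
      rw [← hcard]
      exact Set.ncard_lt_ncard hdss hCfin
    · refine ⟨C, hCX, ⟨?_, ?_⟩, ?_⟩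
      · rw [Matroid.dep_iff]
        refine ⟨fun hind => ?_, by rw [hM.1]; exact Set.subset_univ _⟩
        have hc0 := (colIndep_iff_fun A C).mp ((hM.2 C).mp hind) c
          (fun x hx => by by_contra h; exact hx h) hct
        apply hcs
        rw [hc0]
        simp
      · intro D hD
        rw [hM.2, colIndep_iff_fun]
        intro d hdD hdt
        by_contra hd0
        refine h1 ⟨d, hd0, fun x hx => hdD x (fun h => hx (hD.subset h)), hdt, ?_⟩
        have hsd : Function.support d ⊆ D := fun x hx => by
          by_contra h; exact hx (hdD x h)
        exact lt_of_le_of_lt hsd hD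
      · rw [colIndep_iff_fun]
        intro d hdC hds
        by_contra hd0
        exact h2 ⟨d, hd0, hdC, hds⟩

variable {m E : Type*} [Fintype m] [Fintype E] [DecidableEq E] {p : ℕ} [Fact p.Prime]

theorem esSplitting_rank_subsets (A : Matrix m E (ZMod p)) (a b e : E)
    (he : e = a ∨ e = b) (α : ZMod p) (hα : α ≠ 0)
    (M : Matroid E) (hM : IsVectorMatroid M A)
    (M' : Matroid (E ⊕ Fin 2)) (hM' : IsVectorMatroid M' (esMatrix A a b e α)) :
    ∀ X : Set E,
      ((∃ C, C ⊆ X ∧ IsCircuit M C ∧ ColIndep (splitMatrix A a b α) C) →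
        rk M' (Sum.inl '' X) = rk M X + 1) ∧
      ((¬ ∃ C, C ⊆ X ∧ IsCircuit M C ∧ ColIndep (splitMatrix A a b α) C) →
        rk M' (Sum.inl '' X) = rk M X) := by
  intro X
  have him : (esMatrix A a b e α)ᵀ '' (Sum.inl '' X) = (splitMatrix A a b α)ᵀ '' X := by
    refine (Set.image_image _ _ _).trans ?_
    rfl
  have e1 : rk M X = Module.finrank (ZMod p) (Submodule.span (ZMod p) (Aᵀ '' X)) :=
    rk_eq_finrank hM X
  have e2 : rk M' (Sum.inl '' X) =
      Module.finrank (ZMod p) (Submodule.span (ZMod p) ((splitMatrix A a b α)ᵀ '' X)) := by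
    rw [rk_eq_finrank hM', him]
  have hB := finrank_split_eq (F := ZMod p) (splitMatrix A a b α)ᵀ Aᵀ (fun x i => rfl) X
  have hC := circuit_iff_witness A a b α M hM X
  constructor
  · intro h
    rw [e2, e1, hB.2 (hC.mp h)]
  · intro h
    rw [e2, e1, hB.1 (fun hc => h (hC.mpr hc))]
end

section
/- If a matroid M is n-connected and |E(M)| > 2(n−1), then every circuit and every cocircuit of M has at least n elements. -/
open Matrix Set

variable {α : Type*}

/-! A circuit `C` has `r(C) = |C| - 1`, and the complement of a cocircuit `C`
is non-spanning, so `r(E \ C) < r(M)`. Either way `r(C) + r(E \ C) < r(M) + |C|`, and if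
`|C| < n` the size bound on `E` makes `{C, E \ C}` a `|C|`-separation. -/

section Rank

variable (M : Matroid α) {X Y I : Set α}

lemma zero_mem_indepCards (X : Set α) :
    0 ∈ {n | ∃ I, I ⊆ X ∧ M.Indep I ∧ I.ncard = n} :=
  ⟨∅, empty_subset X, M.empty_indep, ncard_empty α⟩

lemma indepCards_bddAbove (hX : X.Finite) :
    BddAbove {n | ∃ I, I ⊆ X ∧ M.Indep I ∧ I.ncard = n} := by
  refine ⟨X.ncard, ?_⟩
  rintro n ⟨I, hIX, -, rfl⟩
  exact ncard_le_ncard hIX hX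

lemma rk_le_of_forall_indep {m : ℕ} (h : ∀ I ⊆ X, M.Indep I → I.ncard ≤ m) : rk M X ≤ m := by
  refine csSup_le ⟨0, zero_mem_indepCards M X⟩ ?_
  rintro n ⟨I, hIX, hI, rfl⟩
  exact h I hIX hI

lemma exists_indep_ncard_eq_rk (hX : X.Finite) : ∃ I ⊆ X, M.Indep I ∧ I.ncard = rk M X :=
  Nat.sSup_mem ⟨0, zero_mem_indepCards M X⟩ (indepCards_bddAbove M hX)

variable {M}

lemma Matroid.Indep.ncard_le_rk (hI : M.Indep I) (hIX : I ⊆ X) (hX : X.Finite) :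
    I.ncard ≤ rk M X :=
  le_csSup (indepCards_bddAbove M hX) ⟨I, hIX, hI, rfl⟩

lemma rk_le_ncard (hX : X.Finite) : rk M X ≤ X.ncard :=
  rk_le_of_forall_indep M fun _ hIX _ => ncard_le_ncard hIX hX

lemma rk_mono (hY : Y.Finite) (hXY : X ⊆ Y) : rk M X ≤ rk M Y :=
  rk_le_of_forall_indep M fun _ hIX hI => hI.ncard_le_rk (hIX.trans hXY) hY

lemma Matroid.Dep.rk_lt_ncard (hX : M.Dep X) (hXfin : X.Finite) : rk M X < X.ncard := by
  obtain ⟨I, hIX, hI, hIcard⟩ := exists_indep_ncard_eq_rk M hXfin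
  have hIne : I ≠ X := by rintro rfl; exact hX.not_indep hI
  rw [← hIcard]
  exact ncard_lt_ncard (ssubset_of_subset_of_ne hIX hIne) hXfin

/-- A codependent set meets every base, so its complement cannot contain one. -/
lemma Matroid.Dep.rk_compl_lt_of_dual (hX : M✶.Dep X) (hE : M.E.Finite) :
    rk M (M.E \ X) < rk M M.E := by
  obtain ⟨I, hIX, hI, hIcard⟩ := exists_indep_ncard_eq_rk M (hE.sdiff (t := X))
  by_contra! hle
  obtain ⟨B, hB, hIB⟩ := hI.exists_isBase_superset
  have hBcard : B.ncard ≤ rk M M.E := hB.indep.ncard_le_rk hB.subset_ground hE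
  have hIB : I = B := eq_of_subset_of_ncard_le hIB (by omega) (hE.subset hB.subset_ground)
  refine hX.not_indep ((M.dual_indep_iff_exists' (I := X)).2 ⟨hX.subset_ground, B, hB, ?_⟩)
  exact disjoint_sdiff_right.mono_right (hIB ▸ hIX)

end Rank

lemma NConnected.le_ncard_of_rk_add_rk_compl_lt {M : Matroid α} {n : ℕ} {X : Set α}
    (hconn : NConnected M n) (hcard : 2 * (n - 1) < M.E.ncard) (hXE : X ⊆ M.E) (hX : X.Nonempty)
    (hrk : rk M X + rk M (M.E \ X) < rk M M.E + X.ncard) : n ≤ X.ncard := by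
  by_contra! hlt
  have hE : M.E.Finite := finite_of_ncard_pos (by omega)
  have hpos : 1 ≤ X.ncard := (ncard_pos (hE.subset hXE)).2 hX
  have hcompl : (M.E \ X).ncard = M.E.ncard - X.ncard := ncard_sdiff hXE (hE.subset hXE)
  exact hconn X.ncard X (M.E \ X) hpos (by omega)
    ⟨union_sdiff_cancel hXE, disjoint_sdiff_right, le_rfl, by omega, hrk⟩

theorem circuit_cocircuit_card_of_nConnected_general {α : Type*} (M : Matroid α) (n : ℕ)
    (hconn : NConnected M n) (hcard : 2 * (n - 1) < M.E.ncard) :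
    (∀ C, IsCircuit M C → n ≤ C.ncard) ∧ (∀ C, IsCircuit M✶ C → n ≤ C.ncard) := by
  have hE : M.E.Finite := finite_of_ncard_pos (by omega)
  constructor
  · rintro C ⟨hC, -⟩
    have hCE : C ⊆ M.E := hC.subset_ground
    refine hconn.le_ncard_of_rk_add_rk_compl_lt hcard hCE hC.nonempty ?_
    have hrkC := hC.rk_lt_ncard (hE.subset hCE)
    have hrkCompl := rk_mono (M := M) hE (sdiff_subset (s := M.E) (t := C))
    omega
  · rintro C ⟨hC, -⟩
    have hCE : C ⊆ M.E := hC.subset_ground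
    refine hconn.le_ncard_of_rk_add_rk_compl_lt hcard hCE hC.nonempty ?_
    have hrkC := rk_le_ncard (M := M) (hE.subset hCE)
    have hrkCompl := hC.rk_compl_lt_of_dual hE
    omega

theorem circuit_cocircuit_card_of_nConnected {α : Type*} (M : Matroid α) (n : ℕ)
    (hn : 2 ≤ n) (hconn : NConnected M n) (hcard : 2 * (n - 1) < M.E.ncard) :
    (∀ C, IsCircuit M C → n ≤ C.ncard) ∧ (∀ C, IsCircuit M✶ C → n ≤ C.ncard) :=
  circuit_cocircuit_card_of_nConnected_general M n hconn hcard
end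

section
/- Let M be a p-matroid (p > 2 prime) with distinct a, b ∈ E(M), and set e = b. Suppose there exist circuits C_np, C_1, ..., C_k of M such that: C_np is an np-circuit containing a and b; E(M) = C_np ∪ C_1 ∪ ... ∪ C_k; the circuits are pairwise disjoint except C_np ∩ C_1 = {b}. Then the es-splitting matroid M^e_{a,b} is Eulerian, i.e., its ground set is a disjoint union of circuits; explicitly, {C_np ∪ {z}, (C_1 \ {e}) ∪ {γ}, C_2, ..., C_k} is a circuit decomposition of E(M^e_{a,b}). -/
open Matrix Set

variable {α : Type*}

/-!
Dependencies of `A^e_{a,b}` (with `e = b`) are the coefficient vectors `c` such that the upper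
part, with the coefficient of `γ` moved onto `b` (the upper part of `γ = b - z` is the column
`b`), is a dependency of `A`, and such that the coefficients of `a`, `b` and `z` sum to zero.
A dependency of `A` supported in a circuit is zero or has the whole circuit as support. So on
`C_np` the coefficients of `a` and `b` do not cancel and `z` absorbs their sum (a dependency
without `z` would make `C_np` a `p`-circuit); on `C_0` the coefficient of `b` moves to `γ`, and
the last row stays balanced because `a ∉ C_0`; the other circuits avoid `a` and `b` and lift
unchanged.
-/

lemma sum_smul_transpose_eq_mulVec {m ι F : Type*} [CommSemiring F] [Fintype ι]
    (B : Matrix m ι F) (c : ι → F) : ∑ x, c x • Bᵀ x = B *ᵥ c := by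
  ext i
  simp [mulVec, dotProduct, Finset.sum_apply, mul_comm]

lemma colIndep_iff_forall_mulVec_eq_zero {m ι F : Type*} [Field F] [Fintype ι]
    {B : Matrix m ι F} {S : Set ι} :
    ColIndep B S ↔ ∀ c : ι → F, (∀ x ∉ S, c x = 0) → B *ᵥ c = 0 → c = 0 := by
  change LinearIndepOn F (fun x : ι => (Bᵀ x : m → F)) S ↔ _
  rw [linearIndepOn_iff, Finsupp.equivFunOnFinite.symm.forall_congr_left]
  refine forall_congr' fun c => ?_
  simp [Finsupp.mem_supported, Finsupp.linearCombination_apply, Finsupp.sum_fintype,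
    sum_smul_transpose_eq_mulVec, Set.subset_def, not_imp_comm, Finsupp.equivFunOnFinite]

namespace IsVectorMatroid

variable {m ι F : Type*} [Field F] [Fintype ι] {B : Matrix m ι F} {M : Matroid ι} {C : Set ι}

lemma dep_of_mulVec_eq_zero (hM : IsVectorMatroid M B) {c : ι → F} (hcC : ∀ x ∉ C, c x = 0)
    (hc : B *ᵥ c = 0) (hc0 : c ≠ 0) : M.Dep C := by
  rw [Matroid.dep_iff, hM.1, hM.2, colIndep_iff_forall_mulVec_eq_zero]
  exact ⟨fun h => hc0 (h c hcC hc), subset_univ C⟩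

lemma eq_zero_or_forall_ne_zero_of_isCircuit (hM : IsVectorMatroid M B) (hC : IsCircuit M C)
    {d : ι → F} (hdC : ∀ x ∉ C, d x = 0) (hd : B *ᵥ d = 0) : d = 0 ∨ ∀ x ∈ C, d x ≠ 0 := by
  refine or_iff_not_imp_right.2 fun h => ?_
  push Not at h
  obtain ⟨x₀, hx₀C, hx₀⟩ := h
  have hI := (hM.2 _).1 (hC.2 _ (sdiff_singleton_ssubset.2 hx₀C))
  refine colIndep_iff_forall_mulVec_eq_zero.1 hI d (fun x hx => ?_) hd
  by_cases hxx₀ : x = x₀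
  · exact hxx₀ ▸ hx₀
  · exact hdC x fun hxC => hx ⟨hxC, hxx₀⟩

lemma exists_mulVec_eq_zero_of_isCircuit (hM : IsVectorMatroid M B) (hC : IsCircuit M C) :
    ∃ c : ι → F, c ≠ 0 ∧ (∀ x, x ∈ C ↔ c x ≠ 0) ∧ B *ᵥ c = 0 := by
  have hdep := hC.1
  rw [Matroid.dep_iff, hM.2, colIndep_iff_forall_mulVec_eq_zero] at hdep
  push Not at hdep
  obtain ⟨c, hcC, hc, hc0⟩ := hdep.1
  refine ⟨c, hc0, fun x => ⟨fun hx => ?_, not_imp_comm.1 (hcC x)⟩, hc⟩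
  exact ((hM.eq_zero_or_forall_ne_zero_of_isCircuit hC hcC hc).resolve_left hc0) x hx

lemma isCircuit_of_mulVec_eq_zero (hM : IsVectorMatroid M B) {c : ι → F}
    (hcC : ∀ x ∉ C, c x = 0) (hc : B *ᵥ c = 0) (hc0 : c ≠ 0)
    (hmin : ∀ d : ι → F, (∀ x ∉ C, d x = 0) → B *ᵥ d = 0 → d = 0 ∨ ∀ x ∈ C, d x ≠ 0) :
    IsCircuit M C := by
  refine ⟨hM.dep_of_mulVec_eq_zero hcC hc hc0, fun D hD => ?_⟩
  obtain ⟨x₀, hx₀C, hx₀D⟩ := exists_of_ssubset hD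
  rw [hM.2, colIndep_iff_forall_mulVec_eq_zero]
  intro d hdD hd
  refine (hmin d (fun x hx => hdD x fun h => hx (hD.1 h)) hd).resolve_right fun h => ?_
  exact h x₀ hx₀C (hdD x₀ hx₀D)

end IsVectorMatroid

section EsMatrix

variable {m E F : Type*} [Field F] [Fintype E] [DecidableEq E] {A : Matrix m E F} {a b : E}
  {α : F}

lemma esMatrix_mulVec_inl (c : E ⊕ Fin 2 → F) (i : m) :
    (esMatrix A a b b α *ᵥ c) (Sum.inl i) =
      (A *ᵥ (c ∘ Sum.inl + Pi.single b (c (Sum.inr 1)))) i := by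
  simp [esMatrix, splitMatrix, zColumn, mulVec, dotProduct, Fintype.sum_sum_type, mul_add,
    Finset.sum_add_distrib, Pi.single_apply]

lemma esMatrix_mulVec_inr (hab : a ≠ b) (c : E ⊕ Fin 2 → F) (u : Unit) :
    (esMatrix A a b b α *ᵥ c) (Sum.inr u) =
      α * (c (Sum.inl a) + c (Sum.inl b) + c (Sum.inr 0)) := by
  have hpair : ∀ x, (if x = a ∨ x = b then α else 0) * c (Sum.inl x) =
      if x ∈ ({a, b} : Finset E) then α * c (Sum.inl x) else 0 := fun x => by
    simp only [Finset.mem_insert, Finset.mem_singleton, ite_mul, zero_mul]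
  simp only [esMatrix, splitMatrix, zColumn, mulVec, dotProduct, Fintype.sum_sum_type, of_apply,
    Sum.elim_inr, Sum.elim_inl, Fin.sum_univ_two, hpair, Finset.sum_ite_mem, Finset.univ_inter,
    Finset.sum_pair hab]
  simp only [↓reduceIte, one_ne_zero, or_true, sub_self, zero_mul, add_zero]
  ring

lemma esMatrix_mulVec_eq_zero_iff (hab : a ≠ b) (hα : α ≠ 0) (c : E ⊕ Fin 2 → F) :
    esMatrix A a b b α *ᵥ c = 0 ↔
      A *ᵥ (c ∘ Sum.inl + Pi.single b (c (Sum.inr 1))) = 0 ∧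
        c (Sum.inl a) + c (Sum.inl b) + c (Sum.inr 0) = 0 := by
  simp only [funext_iff, Sum.forall, esMatrix_mulVec_inl, esMatrix_mulVec_inr hab, Pi.zero_apply,
    mul_eq_zero, hα, false_or, forall_const]

end EsMatrix

section EsCircuits

variable {m E F : Type*} [Field F] [Fintype E] [DecidableEq E] {A : Matrix m E F} {a b : E}
  {α : F} {M : Matroid E} {M' : Matroid (E ⊕ Fin 2)} {C : Set E}

lemma isCircuit_es_image_union_z (hM : IsVectorMatroid M A)
    (hM' : IsVectorMatroid M' (esMatrix A a b b α)) (hab : a ≠ b) (hα : α ≠ 0)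
    (hC : IsCircuit M C) (hCp : ¬ HasPDependence A a b C) :
    IsCircuit M' (Sum.inl '' C ∪ {Sum.inr 0}) := by
  obtain ⟨c, -, hcC, hc⟩ := hM.exists_mulVec_eq_zero_of_isCircuit hC
  have hcab : c a + c b ≠ 0 := fun h =>
    hCp ⟨c, hcC, by rwa [sum_smul_transpose_eq_mulVec], h⟩
  refine hM'.isCircuit_of_mulVec_eq_zero (c := Sum.elim c ![-(c a + c b), 0]) ?_ ?_ ?_ ?_
  · rintro (x | t) hx
    · simpa [hcC] using hx
    · fin_cases t <;> simp_all
  · rw [esMatrix_mulVec_eq_zero_iff hab hα]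
    simpa using hc
  · exact fun h => neg_ne_zero.2 hcab (congrFun h (Sum.inr 0))
  intro d hdC hd
  rw [esMatrix_mulVec_eq_zero_iff hab hα] at hd
  obtain ⟨hA, hrow⟩ := hd
  have hd1 : d (Sum.inr 1) = 0 := hdC _ (by simp)
  rw [hd1, Pi.single_zero, add_zero] at hA
  rcases hM.eq_zero_or_forall_ne_zero_of_isCircuit hC (d := d ∘ Sum.inl)
    (fun x hx => hdC _ (by simpa using hx)) hA with h | h
  · left
    have hinl : ∀ x, d (Sum.inl x) = 0 := congrFun h
    rw [hinl, hinl, zero_add, zero_add] at hrow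
    ext (x | t)
    · exact hinl x
    · fin_cases t
      exacts [hrow, hd1]
  · right
    rintro _ (⟨x, hx, rfl⟩ | hz)
    · exact h x hx
    rw [mem_singleton_iff.1 hz]
    intro hd0
    have hdC' : ∀ x, x ∈ C ↔ d (Sum.inl x) ≠ 0 :=
      fun x => ⟨h x, not_imp_comm.1 fun hx => hdC _ (by simpa using hx)⟩
    exact hCp ⟨d ∘ Sum.inl, hdC', by rwa [sum_smul_transpose_eq_mulVec],
      by simpa [hd0] using hrow⟩

lemma isCircuit_es_image_diff_union_gamma (hM : IsVectorMatroid M A)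
    (hM' : IsVectorMatroid M' (esMatrix A a b b α)) (hab : a ≠ b) (hα : α ≠ 0)
    (hC : IsCircuit M C) (hbC : b ∈ C) (haC : a ∉ C) :
    IsCircuit M' (Sum.inl '' (C \ {b}) ∪ {Sum.inr 1}) := by
  obtain ⟨c, -, hcC, hc⟩ := hM.exists_mulVec_eq_zero_of_isCircuit hC
  have hca : c a = 0 := not_not.1 (mt (hcC a).2 haC)
  refine hM'.isCircuit_of_mulVec_eq_zero (c := Sum.elim (Function.update c b 0) ![0, c b])
    ?_ ?_ ?_ ?_
  · rintro (x | t) hx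
    · by_cases hxb : x = b
      · simp [hxb]
      · simpa [hxb, hcC] using hx
    · fin_cases t <;> simp_all
  · have hfold : Function.update c b 0 + Pi.single b (c b) = c := by
      ext x
      by_cases hxb : x = b <;> simp [hxb]
    rw [esMatrix_mulVec_eq_zero_iff hab hα]
    simpa only [Sum.elim_comp_inl, Sum.elim_inl, Sum.elim_inr, Matrix.cons_val_one,
      Matrix.cons_val_zero, hfold, Function.update_of_ne hab, Function.update_self, hca, add_zero,
      and_true] using hc
  · exact fun h => (hcC b).1 hbC (congrFun h (Sum.inr 1))
  intro d hdC hd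
  rw [esMatrix_mulVec_eq_zero_iff hab hα] at hd
  have hdb : d (Sum.inl b) = 0 := hdC _ (by simp)
  have hd0 : d (Sum.inr 0) = 0 := hdC _ (by simp)
  set e := d ∘ Sum.inl + Pi.single b (d (Sum.inr 1)) with he
  have heb : e b = d (Sum.inr 1) := by simp [he, hdb]
  have hex : ∀ x ≠ b, e x = d (Sum.inl x) := fun x hx => by simp [he, hx]
  have heC : ∀ x ∉ C, e x = 0 := fun x hx => by
    rw [hex x fun h => hx (h ▸ hbC)]
    exact hdC _ (by simp [hx])
  rcases hM.eq_zero_or_forall_ne_zero_of_isCircuit hC heC hd.1 with h | h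
  · left
    ext (x | t)
    · by_cases hxb : x = b
      · rw [hxb, hdb, Pi.zero_apply]
      · rw [← hex x hxb, h, Pi.zero_apply, Pi.zero_apply]
    · fin_cases t
      exacts [hd0, heb ▸ congrFun h b]
  · right
    rintro _ (⟨x, hx, rfl⟩ | hz)
    · rw [← hex x hx.2]
      exact h x hx.1
    · rw [mem_singleton_iff.1 hz, ← heb]
      exact h b hbC

lemma isCircuit_es_image (hM : IsVectorMatroid M A)
    (hM' : IsVectorMatroid M' (esMatrix A a b b α)) (hab : a ≠ b) (hα : α ≠ 0)
    (hC : IsCircuit M C) (haC : a ∉ C) (hbC : b ∉ C) :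
    IsCircuit M' (Sum.inl '' C) := by
  obtain ⟨c, hc0, hcC, hc⟩ := hM.exists_mulVec_eq_zero_of_isCircuit hC
  refine hM'.isCircuit_of_mulVec_eq_zero (c := Sum.elim c 0) ?_ ?_ ?_ ?_
  · rintro (x | t) hx
    · simpa [hcC] using hx
    · rfl
  · rw [esMatrix_mulVec_eq_zero_iff hab hα]
    simpa [not_not.1 (mt (hcC a).2 haC), not_not.1 (mt (hcC b).2 hbC)] using hc
  · exact fun h => hc0 (funext fun x => congrFun h (Sum.inl x))
  intro d hdC hd
  rw [esMatrix_mulVec_eq_zero_iff hab hα] at hd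
  have hdr : ∀ t, d (Sum.inr t) = 0 := fun t => hdC _ (by simp)
  rw [hdr, Pi.single_zero, add_zero] at hd
  rcases hM.eq_zero_or_forall_ne_zero_of_isCircuit hC (d := d ∘ Sum.inl)
    (fun x hx => hdC _ (by simpa using hx)) hd.1 with h | h
  · left
    ext (x | t)
    exacts [congrFun h x, hdr t]
  · right
    rintro _ ⟨x, hx, rfl⟩
    exact h x hx

end EsCircuits

lemma eulerian_of_finite_decomposition {ι : Type*} [Finite ι] {M : Matroid α}
    (D : ι → Set α) (hD : ∀ i, IsCircuit M (D i))
    (hdisj : ∀ i j, i ≠ j → Disjoint (D i) (D j)) (hcover : ⋃ i, D i = M.E) : Eulerian M := by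
  obtain ⟨n, ⟨e⟩⟩ := Finite.exists_equiv_fin ι
  refine ⟨n, D ∘ e.symm, fun i => hD _, fun i j hij => hdisj _ _ (e.symm.injective.ne hij), ?_⟩
  rw [← hcover]
  exact e.symm.surjective.iUnion_comp D

section EsDecomposition

variable {E : Type*} {k : ℕ} {b : E} {Cnp : Set E} {Cs : Fin (k + 1) → Set E}

def esPieces (Cnp : Set E) (Cs : Fin (k + 1) → Set E) (b : E) :
    Option (Fin (k + 1)) → Set (E ⊕ Fin 2) := fun o =>
  o.elim (Sum.inl '' Cnp ∪ {Sum.inr 0}) fun i =>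
    if i = 0 then Sum.inl '' (Cs 0 \ {b}) ∪ {Sum.inr 1} else Sum.inl '' Cs i

lemma esPieces_disjoint (hdisj : ∀ i j, i ≠ j → Disjoint (Cs i) (Cs j))
    (hdisj' : ∀ i, i ≠ 0 → Disjoint Cnp (Cs i)) (hint : Cnp ∩ Cs 0 = {b})
    (o o' : Option (Fin (k + 1))) (ho : o ≠ o') :
    Disjoint (esPieces Cnp Cs b o) (esPieces Cnp Cs b o') := by
  have h0 : ∀ x, x ∈ Cnp → x ∈ Cs 0 → x = b := fun x h1 h2 => hint.subset ⟨h1, h2⟩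
  have h1 : ∀ i x, i ≠ 0 → x ∈ Cnp → x ∉ Cs i := fun i x hi hx =>
    Set.disjoint_left.1 (hdisj' i hi) hx
  have h2 : ∀ i j x, x ∈ Cs i → x ∈ Cs j → i = j := fun i j x hi hj => by
    by_contra h
    exact Set.disjoint_left.1 (hdisj i j h) hi hj
  rcases o with _ | i <;> rcases o' with _ | j <;> simp only [esPieces, Option.elim] <;>
    rw [Set.disjoint_left] <;> rintro (x | t) <;> grind

lemma iUnion_esPieces (hcover : (Set.univ : Set E) = Cnp ∪ ⋃ i, Cs i) (hint : Cnp ∩ Cs 0 = {b}) :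
    ⋃ o, esPieces Cnp Cs b o = univ := by
  refine eq_univ_iff_forall.2 fun y => mem_iUnion.2 ?_
  rcases y with x | t
  · by_cases hxC : x ∈ Cnp
    · exact ⟨none, by simp [esPieces, hxC]⟩
    obtain ⟨i, hi⟩ := mem_iUnion.1 ((hcover ▸ mem_univ x : x ∈ Cnp ∪ ⋃ i, Cs i).resolve_left hxC)
    refine ⟨some i, ?_⟩
    have hb : b ∈ Cnp := (hint.superset rfl).1
    by_cases hi0 : i = 0 <;> simp [esPieces, hi0] <;> grind
  · fin_cases t
    exacts [⟨none, by simp [esPieces]⟩, ⟨some 0, by simp [esPieces]⟩]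

end EsDecomposition

variable {m E : Type*} [Fintype m] [Fintype E] [DecidableEq E] {p : ℕ} [Fact p.Prime]

theorem esSplitting_eulerian_of_decomposition_general
    (A : Matrix m E (ZMod p)) (a b : E) (hab : a ≠ b) (α : ZMod p) (hα : α ≠ 0)
    (M : Matroid E) (hM : IsVectorMatroid M A)
    (M' : Matroid (E ⊕ Fin 2)) (hM' : IsVectorMatroid M' (esMatrix A a b b α))
    (k : ℕ) (Cnp : Set E) (Cs : Fin (k + 1) → Set E)
    (hnp : IsNpCircuit M A a b Cnp) (haC : a ∈ Cnp)
    (hcirc : ∀ i, IsCircuit M (Cs i))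
    (hcover : (Set.univ : Set E) = Cnp ∪ ⋃ i, Cs i)
    (hdisj : ∀ i j, i ≠ j → Disjoint (Cs i) (Cs j))
    (hdisj' : ∀ i, i ≠ 0 → Disjoint Cnp (Cs i))
    (hint : Cnp ∩ Cs 0 = {b}) :
    Eulerian M' ∧
      IsCircuit M' (Sum.inl '' Cnp ∪ {Sum.inr 0}) ∧
      IsCircuit M' (Sum.inl '' (Cs 0 \ {b}) ∪ {Sum.inr 1}) ∧
      (∀ i, i ≠ 0 → IsCircuit M' (Sum.inl '' Cs i)) := by
  have hb : b ∈ Cnp ∩ Cs 0 := hint.superset rfl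
  have ha : a ∉ Cs 0 := fun h => hab (hint.subset ⟨haC, h⟩)
  have hnp' := isCircuit_es_image_union_z hM hM' hab hα hnp.1 hnp.2.2
  have h0 := isCircuit_es_image_diff_union_gamma hM hM' hab hα (hcirc 0) hb.2 ha
  have hi : ∀ i, i ≠ 0 → IsCircuit M' (Sum.inl '' Cs i) := fun i hi =>
    isCircuit_es_image hM hM' hab hα (hcirc i) (disjoint_left.1 (hdisj' i hi) haC)
      (disjoint_left.1 (hdisj' i hi) hb.1)
  refine ⟨eulerian_of_finite_decomposition _ ?_ (esPieces_disjoint hdisj hdisj' hint)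
    (hM'.1 ▸ iUnion_esPieces hcover hint), hnp', h0, hi⟩
  rintro (_ | i)
  · exact hnp'
  · by_cases hi0 : i = 0
    · simpa [esPieces, hi0] using h0
    · simpa [esPieces, hi0] using hi i hi0

theorem esSplitting_eulerian_of_decomposition (hp2 : 2 < p)
    (A : Matrix m E (ZMod p)) (a b : E) (hab : a ≠ b) (α : ZMod p) (hα : α ≠ 0)
    (M : Matroid E) (hM : IsVectorMatroid M A)
    (M' : Matroid (E ⊕ Fin 2)) (hM' : IsVectorMatroid M' (esMatrix A a b b α))
    (k : ℕ) (Cnp : Set E) (Cs : Fin (k + 1) → Set E)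
    (hnp : IsNpCircuit M A a b Cnp) (haC : a ∈ Cnp) (hbC : b ∈ Cnp)
    (hcirc : ∀ i, IsCircuit M (Cs i))
    (hcover : (Set.univ : Set E) = Cnp ∪ ⋃ i, Cs i)
    (hdisj : ∀ i j, i ≠ j → Disjoint (Cs i) (Cs j))
    (hdisj' : ∀ i, i ≠ 0 → Disjoint Cnp (Cs i))
    (hint : Cnp ∩ Cs 0 = {b}) :
    Eulerian M' ∧
      IsCircuit M' (Sum.inl '' Cnp ∪ {Sum.inr 0}) ∧
      IsCircuit M' (Sum.inl '' (Cs 0 \ {b}) ∪ {Sum.inr 1}) ∧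
      (∀ i, i ≠ 0 → IsCircuit M' (Sum.inl '' Cs i)) :=
  esSplitting_eulerian_of_decomposition_general A a b hab α hα M hM M' hM' k Cnp Cs hnp haC hcirc
    hcover hdisj hdisj' hint
end
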